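/- arXiv:1710.03896 — 2 statements merged into one kernel-verified Lean document; each statement's English description precedes it below -/
import Mathlib

section
/- For n \geq 3 and adjacent positions i, i+1 with 1 \leq i \leq 2n-2, the number of matchings \pi \in S_{2n} having descents at both positions i and i+1 equals \frac{n+1}{3(2n-1)} (2n-1)!!. -/
open Finset

/-- A matching (fixed point free involution). -/
def IsMatching {m : ℕ} (π : Equiv.Perm (Fin m)) : Prop :=
  π * π = 1 ∧ ∀ i, π i ≠ i

instance {m : ℕ} (π : Equiv.Perm (Fin m)) : Decidable (IsMatching π) := by
  unfold IsMatching; infer_instance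

/-- The set of matchings in `S_{2n}`. -/
def matchings (n : ℕ) : Finset (Equiv.Perm (Fin (2 * n))) :=
  Finset.univ.filter IsMatching

/-- Descent set (0-based indices `i` with `π i > π (i+1)`). -/
def desSet {m : ℕ} (π : Equiv.Perm (Fin m)) : Finset (Fin m) :=
  Finset.univ.filter fun i =>
    if h : (i : ℕ) + 1 < m then π ⟨(i : ℕ) + 1, h⟩ < π i else False

/-- Descent number `d(π) = |Des(π)| + 1`. -/
def desNum {m : ℕ} (π : Equiv.Perm (Fin m)) : ℕ := (desSet π).card + 1

/-- Major index: sum of the (1-based) descent positions. -/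
def maj {m : ℕ} (π : Equiv.Perm (Fin m)) : ℕ := ∑ i ∈ desSet π, ((i : ℕ) + 1)

/-- The double factorial `(2n-1)!! = ∏_{i=1}^n (2i-1)`. -/
def doubleFac (n : ℕ) : ℕ := ∏ i ∈ Finset.range n, (2 * i + 1)

/-!
Write `X, Y, Z` for the (0-based) positions `i - 1, i, i + 1`. A matching `π` with
`π X > π Y > π Z` either pairs `X` with `Y`, and then `π Z < X`; or pairs `Y` with `Z`, and then
`π X > Z`; or, because the three positions are consecutive (pairing `X` with `Z` would force
`π Y = Y`), it sends `X, Y, Z` to three points outside `{X, Y, Z}`, in decreasing order. Fixing a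
value `π a = c` leaves a matching of the remaining points (`π ↦ (a c) * π`), so the three cases
contribute `X · (2n-5)!!`, `(2n-1-Z) · (2n-5)!!` and `C(2n-3, 3) · (2n-7)!!`, and
`(2n-3) (2n-5)!! + C(2n-3, 3) (2n-7)!! = (n+1)/(3(2n-1)) · (2n-1)!!`.
-/

open Equiv

lemma Equiv.Perm.apply_apply_of_mul_self_eq_one {α : Type*} {π : Perm α} (h : π * π = 1)
    (x : α) : π (π x) = x := by
  rw [← Perm.mul_apply, h, Perm.one_apply]

lemma Finset.card_sdiff_pair {α : Type*} [DecidableEq α] {s : Finset α} {a c : α} (ha : a ∈ s)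
    (hc : c ∈ s) (hac : a ≠ c) : #(s \ {a, c}) = #s - 2 := by
  rw [card_sdiff_of_subset (insert_subset ha (singleton_subset_iff.2 hc)), card_pair hac]

lemma doubleFac_succ (k : ℕ) : doubleFac (k + 1) = (2 * k + 1) * doubleFac k := by
  rw [doubleFac, prod_range_succ, mul_comm, doubleFac]

section Matchings

variable {α : Type*} [DecidableEq α] [Fintype α]

def matchingsOn (s : Finset α) : Finset (Perm α) := {π | π * π = 1 ∧ π.support = s}

@[simp]
lemma mem_matchingsOn {s : Finset α} {π : Perm α} :
    π ∈ matchingsOn s ↔ π * π = 1 ∧ π.support = s := by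
  simp [matchingsOn]

lemma mem_matchingsOn_univ {π : Perm α} :
    π ∈ matchingsOn univ ↔ π * π = 1 ∧ ∀ x, π x ≠ x := by
  simp [eq_univ_iff_forall]

variable {s : Finset α} {a c : α}

lemma apply_eq_self_of_mem_matchingsOn {σ : Perm α} (hσ : σ ∈ matchingsOn s) {b : α}
    (hb : b ∉ s) : σ b = b :=
  Perm.notMem_support.1 ((mem_matchingsOn.1 hσ).2 ▸ hb)

lemma swap_mul_mem_matchingsOn_iff (ha : a ∈ s) (hc : c ∈ s) (hac : a ≠ c) {σ : Perm α}
    (hσa : σ a = a) (hσc : σ c = c) :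
    swap a c * σ ∈ matchingsOn s ↔ σ ∈ matchingsOn (s \ {a, c}) := by
  have hdisj : (swap a c).Disjoint σ := fun x => by
    by_cases hx : x = a ∨ x = c
    · rcases hx with rfl | rfl <;> simp [*]
    · push Not at hx; exact Or.inl (swap_apply_of_ne_of_ne hx.1 hx.2)
  have hsq : swap a c * σ * (swap a c * σ) = σ * σ := by
    rw [mul_assoc, ← mul_assoc σ, ← hdisj.commute.eq, mul_assoc, ← mul_assoc, swap_mul_self,
      one_mul]
  have hsupp : Disjoint {a, c} σ.support := by simp [hσa, hσc]
  rw [mem_matchingsOn, mem_matchingsOn, hsq, hdisj.support_mul, Perm.support_swap hac]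
  refine and_congr_right fun _ => ⟨fun h => ?_, fun h => ?_⟩
  · rw [← h, union_sdiff_left, sdiff_eq_self_of_disjoint hsupp.symm]
  · rw [h, union_sdiff_of_subset (insert_subset ha (singleton_subset_iff.2 hc))]

lemma filter_apply_eq_matchingsOn (ha : a ∈ s) (hc : c ∈ s) (hac : a ≠ c) :
    {π ∈ matchingsOn s | π a = c} =
      (matchingsOn (s \ {a, c})).map (mulLeftEmbedding (swap a c)) := by
  ext π
  simp only [mem_filter, mem_map, mulLeftEmbedding_apply]
  constructor
  · rintro ⟨hπ, hπa⟩
    have hπc : π c = a := by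
      rw [← hπa, π.apply_apply_of_mul_self_eq_one (mem_matchingsOn.1 hπ).1]
    refine ⟨swap a c * π, ?_, swap_mul_self_mul a c π⟩
    rw [← swap_mul_mem_matchingsOn_iff ha hc hac, swap_mul_self_mul]
    · exact hπ
    · simp [Perm.mul_apply, hπa]
    · simp [Perm.mul_apply, hπc]
  · rintro ⟨σ, hσ, rfl⟩
    have hfix : σ a = a ∧ σ c = c :=
      ⟨apply_eq_self_of_mem_matchingsOn hσ (by simp), apply_eq_self_of_mem_matchingsOn hσ (by simp)⟩
    exact ⟨(swap_mul_mem_matchingsOn_iff ha hc hac hfix.1 hfix.2).2 hσ,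
      by simp [Perm.mul_apply, hfix.1]⟩

lemma card_filter_apply_eq (ha : a ∈ s) (hc : c ∈ s) (hac : a ≠ c) :
    #{π ∈ matchingsOn s | π a = c} = #(matchingsOn (s \ {a, c})) := by
  rw [filter_apply_eq_matchingsOn ha hc hac, card_map]

lemma card_filter_apply_eq_and (ha : a ∈ s) (hc : c ∈ s) (hac : a ≠ c) {p : Perm α → Prop}
    [DecidablePred p] (hp : ∀ σ ∈ matchingsOn (s \ {a, c}), p (swap a c * σ) ↔ p σ) :
    #{π ∈ matchingsOn s | π a = c ∧ p π} = #{σ ∈ matchingsOn (s \ {a, c}) | p σ} := by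
  rw [← filter_filter, filter_apply_eq_matchingsOn ha hc hac, filter_map, card_map]
  exact congrArg card (filter_congr hp)

lemma swap_mul_apply_of_mem_matchingsOn {σ : Perm α} (hσ : σ ∈ matchingsOn (s \ {a, c}))
    {b : α} (hba : b ≠ a) (hbc : b ≠ c) : (swap a c * σ) b = σ b := by
  have hfix : σ a = a ∧ σ c = c :=
    ⟨apply_eq_self_of_mem_matchingsOn hσ (by simp), apply_eq_self_of_mem_matchingsOn hσ (by simp)⟩
  rw [Perm.mul_apply, swap_apply_of_ne_of_ne]
  · exact fun h => hba (σ.injective (h.trans hfix.1.symm))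
  · exact fun h => hbc (σ.injective (h.trans hfix.2.symm))

lemma card_filter_apply_mem_of_card (ha : a ∈ s) {I : Finset α} (hI : I ⊆ s.erase a) {N : ℕ}
    (hN : ∀ c ∈ I, #(matchingsOn (s \ {a, c})) = N) :
    #{π ∈ matchingsOn s | π a ∈ I} = #I * N := by
  rw [card_eq_sum_card_fiberwise (s := {π ∈ matchingsOn s | π a ∈ I}) (f := (· a)) (t := I)
    fun _ hπ => (mem_filter.1 hπ).2]
  refine sum_const_nat fun c hc => ?_
  obtain ⟨hca, hcs⟩ := mem_erase.1 (hI hc)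
  rw [filter_filter, ← hN c hc, ← card_filter_apply_eq ha hcs hca.symm]
  exact congrArg card (filter_congr fun π _ => ⟨And.right, fun h => ⟨h ▸ hc, h⟩⟩)

theorem card_matchingsOn (k : ℕ) (hs : #s = 2 * k) : #(matchingsOn s) = doubleFac k := by
  induction k generalizing s with
  | zero =>
    rw [mul_zero, card_eq_zero] at hs
    subst hs
    have : matchingsOn (∅ : Finset α) = {1} := by ext π; simp +contextual
    simp [this, doubleFac]
  | succ k ih =>
    obtain ⟨a, ha⟩ : s.Nonempty := card_pos.1 (by omega)
    have hall : matchingsOn s = {π ∈ matchingsOn s | π a ∈ s.erase a} := by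
      refine (filter_true_of_mem fun π hπ => ?_).symm
      obtain ⟨-, hsupp⟩ := mem_matchingsOn.1 hπ
      rw [← hsupp] at ha ⊢
      exact mem_erase.2 ⟨Perm.mem_support.1 ha, Perm.apply_mem_support.2 ha⟩
    rw [hall, card_filter_apply_mem_of_card ha subset_rfl fun c hc => ih ?_, card_erase_of_mem ha,
      hs, doubleFac_succ]
    · rfl
    · obtain ⟨hca, hcs⟩ := mem_erase.1 hc
      rw [card_sdiff_pair ha hcs hca.symm]
      omega

lemma card_filter_apply_mem {k : ℕ} (hs : #s = 2 * k + 2) (ha : a ∈ s) {I : Finset α}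
    (hI : I ⊆ s.erase a) : #{π ∈ matchingsOn s | π a ∈ I} = #I * doubleFac k := by
  refine card_filter_apply_mem_of_card ha hI fun c hc => card_matchingsOn k ?_
  obtain ⟨hca, hcs⟩ := mem_erase.1 (hI hc)
  rw [card_sdiff_pair ha hcs hca.symm]
  omega

lemma card_filter_apply_eq_and_apply_mem {k : ℕ} (hs : #s = 2 * k + 4) (ha : a ∈ s) (hc : c ∈ s)
    (hac : a ≠ c) {b : α} (hb : b ∈ s \ {a, c}) {I : Finset α} (hI : I ⊆ (s \ {a, c}).erase b) :
    #{π ∈ matchingsOn s | π a = c ∧ π b ∈ I} = #I * doubleFac k := by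
  have hbac : b ≠ a ∧ b ≠ c := by simpa using (mem_sdiff.1 hb).2
  rw [card_filter_apply_eq_and ha hc hac fun σ hσ => by
    rw [swap_mul_apply_of_mem_matchingsOn hσ hbac.1 hbac.2]]
  exact card_filter_apply_mem (by rw [card_sdiff_pair ha hc hac]; omega) hb hI

lemma card_filter_apply_eq_three {k : ℕ} (hs : #s = 2 * k + 6) {x y z b : α} (hx : x ∈ s)
    (ha : a ∈ s) (hxa : x ≠ a) (hy : y ∈ s \ {x, a}) (hb : b ∈ s \ {x, a}) (hyb : y ≠ b)
    (hz : z ∈ (s \ {x, a}) \ {y, b}) (hc : c ∈ ((s \ {x, a}) \ {y, b}).erase z) :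
    #{π ∈ matchingsOn s | π x = a ∧ π y = b ∧ π z = c} = doubleFac k := by
  have hyxa : y ≠ x ∧ y ≠ a := by simpa using (mem_sdiff.1 hy).2
  have hzxa : z ≠ x ∧ z ≠ a := by simpa using (mem_sdiff.1 (mem_sdiff.1 hz).1).2
  rw [card_filter_apply_eq_and hx ha hxa fun σ hσ => by
    rw [swap_mul_apply_of_mem_matchingsOn hσ hyxa.1 hyxa.2,
      swap_mul_apply_of_mem_matchingsOn hσ hzxa.1 hzxa.2]]
  simpa using card_filter_apply_eq_and_apply_mem (k := k)
    (by rw [card_sdiff_pair hx ha hxa]; omega) hy hb hyb hz (singleton_subset_iff.2 hc)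

end Matchings

lemma strictMono_vecCons_three {α : Type*} [Preorder α] {a b c : α} (hcb : c < b)
    (hba : b < a) : StrictMono ![c, b, a] := by
  rw [Fin.strictMono_iff_lt_succ]
  simp [Fin.forall_fin_two, hcb, hba]

lemma card_filter_lt_lt_eq_choose {α : Type*} [LinearOrder α] (s : Finset α) :
    #{t ∈ s ×ˢ s ×ˢ s | t.2.2 < t.2.1 ∧ t.2.1 < t.1} = (#s).choose 3 := by
  rw [← card_powersetCard]
  refine card_bij (fun t _ => {t.1, t.2.1, t.2.2}) ?_ ?_ ?_
  · rintro ⟨a, b, c⟩ ht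
    obtain ⟨⟨ha, hb, hc⟩, hcb, hba⟩ := by simpa only [mem_filter, mem_product] using ht
    simp only [mem_powersetCard, insert_subset_iff, singleton_subset_iff]
    exact ⟨⟨ha, hb, hc⟩, card_eq_three.2 ⟨a, b, c, hba.ne', (hcb.trans hba).ne', hcb.ne', rfl⟩⟩
  · rintro ⟨a, b, c⟩ ht ⟨a', b', c'⟩ ht' heq
    obtain ⟨-, hcb, hba⟩ := mem_filter.1 ht
    obtain ⟨-, hcb', hba'⟩ := mem_filter.1 ht'
    have h3 : #({a, b, c} : Finset α) = 3 :=
      card_eq_three.2 ⟨a, b, c, hba.ne', (hcb.trans hba).ne', hcb.ne', rfl⟩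
    -- both triples list `{a, b, c}` in increasing order, which is unique
    have e := (orderEmbOfFin_unique h3 (by simp [Fin.forall_fin_succ])
      (strictMono_vecCons_three hcb hba)).trans (orderEmbOfFin_unique h3
        (by simp [Fin.forall_fin_succ, heq]) (strictMono_vecCons_three hcb' hba')).symm
    simp only [Matrix.vecCons_inj] at e
    simp [e]
  · intro T hT
    obtain ⟨hTs, h3⟩ := mem_powersetCard.1 hT
    set e := T.orderEmbOfFin h3
    have he : ∀ j, e j ∈ s := fun j => hTs (orderEmbOfFin_mem T h3 j)
    refine ⟨(e 2, e 1, e 0), ?_, ?_⟩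
    · simp only [mem_filter, mem_product]
      exact ⟨⟨he 2, he 1, he 0⟩, e.strictMono (by decide), e.strictMono (by decide)⟩
    · ext x
      rw [← mem_coe (s := T), ← range_orderEmbOfFin T h3]
      simp only [mem_insert, mem_singleton, Set.mem_range, Fin.exists_fin_succ,
        Fin.exists_fin_zero]
      tauto

section DoubleDescent

variable {m : ℕ} {X Y Z : Fin m}

lemma card_filter_double_descent_eq_add (hXY : (X : ℕ) + 1 = Y) (hYZ : (Y : ℕ) + 1 = Z) :
    #{π ∈ matchingsOn univ | π Y < π X ∧ π Z < π Y} =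
      #{π ∈ matchingsOn univ | π X = Y ∧ π Z ∈ Iio X} +
      (#{π ∈ matchingsOn univ | π Y = Z ∧ π X ∈ Ioi Z} +
      #{π ∈ matchingsOn univ | (π Y < π X ∧ π Z < π Y) ∧ π X ≠ Y ∧ π Y ≠ Z}) := by
  set D := {π ∈ matchingsOn (univ : Finset (Fin m)) | π Y < π X ∧ π Z < π Y}
  rw [← card_filter_add_card_filter_not (s := D) (fun π => π X = Y),
    ← card_filter_add_card_filter_not (s := {π ∈ D | π X ≠ Y}) (fun π => π Y = Z)]
  simp only [D, filter_filter]
  have hXY' : X < Y := Fin.lt_def.2 (by omega)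
  have hYZ' : Y < Z := Fin.lt_def.2 (by omega)
  refine congrArg₂ (· + ·) (congrArg card ?_)
      (congrArg₂ (· + ·) (congrArg card ?_) (congrArg card ?_)) <;>
    refine filter_congr fun π hπ => ?_
  all_goals obtain ⟨hsq, -⟩ := mem_matchingsOn_univ.1 hπ
  · by_cases h : π X = Y
    · have hYX : π Y = X := by rw [← h, π.apply_apply_of_mul_self_eq_one hsq]
      simp [h, hYX, hXY']
    · simp [h]
  · by_cases h : π Y = Z
    · have hZY : π Z = Y := by rw [← h, π.apply_apply_of_mul_self_eq_one hsq]
      simp only [h, hZY, hYZ', mem_Ioi, true_and, and_true]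
      exact and_iff_left_of_imp fun hZX => (hYZ'.trans hZX).ne'
    · simp [h]
  · exact and_assoc

lemma apply_mem_compl_of_double_descent (hXY : (X : ℕ) + 1 = Y) (hYZ : (Y : ℕ) + 1 = Z)
    {π : Perm (Fin m)} (hπ : π ∈ matchingsOn univ) (hYX : π Y < π X) (hZY : π Z < π Y)
    (hXY' : π X ≠ Y) (hYZ' : π Y ≠ Z) :
    π X ∈ ({X, Y, Z} : Finset (Fin m))ᶜ ∧ π Y ∈ ({X, Y, Z} : Finset (Fin m))ᶜ ∧
      π Z ∈ ({X, Y, Z} : Finset (Fin m))ᶜ := by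
  obtain ⟨hsq, hne⟩ := mem_matchingsOn_univ.1 hπ
  have hinv := π.apply_apply_of_mul_self_eq_one hsq
  have hYX' : π Y ≠ X := fun h => hXY' (by rw [← h, hinv])
  have hZY' : π Z ≠ Y := fun h => hYZ' (by rw [← h, hinv])
  -- `π X = Z` would force `X < π Y < Z`, i.e. `π Y = Y`
  have hXZ' : π X ≠ Z := fun h => hne Y <| Fin.ext <| by
    rw [h] at hYX
    rw [← h, hinv] at hZY
    rw [Fin.lt_def] at hYX hZY
    omega
  have hZX' : π Z ≠ X := fun h => hXZ' (by rw [← h, hinv])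
  simp [hne, hXY', hXZ', hYX', hYZ', hZX', hZY']

lemma card_filter_double_descent_of_ne {k : ℕ} (hm : m = 2 * k + 6) (hXY : (X : ℕ) + 1 = Y)
    (hYZ : (Y : ℕ) + 1 = Z) :
    #{π ∈ matchingsOn univ | (π Y < π X ∧ π Z < π Y) ∧ π X ≠ Y ∧ π Y ≠ Z} =
      (2 * k + 3).choose 3 * doubleFac k := by
  set s : Finset (Fin m) := {X, Y, Z}ᶜ
  have hs : #s = 2 * k + 3 := by
    have hXYZ : X ≠ Y ∧ X ≠ Z ∧ Y ≠ Z := by simp only [ne_eq, Fin.ext_iff]; omega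
    rw [card_compl, Fintype.card_fin, card_eq_three.2 ⟨X, Y, Z, hXYZ.1, hXYZ.2.1, hXYZ.2.2, rfl⟩]
    omega
  rw [card_eq_sum_card_fiberwise (f := fun π => (π X, π Y, π Z))
      (t := {t ∈ s ×ˢ s ×ˢ s | t.2.2 < t.2.1 ∧ t.2.1 < t.1}) fun π hπ => by
        obtain ⟨hπ, ⟨hYX, hZY⟩, hXY', hYZ'⟩ := mem_filter.1 hπ
        simpa only [mem_coe, mem_filter, mem_product, hZY, hYX, and_true] using
          apply_mem_compl_of_double_descent hXY hYZ hπ hYX hZY hXY' hYZ',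
    sum_const_nat (m := doubleFac k), card_filter_lt_lt_eq_choose, hs]
  rintro ⟨a, b, c⟩ ht
  obtain ⟨⟨ha, hb, hc⟩, hcb, hba⟩ := by simpa only [mem_filter, mem_product] using ht
  simp only [s, mem_compl, mem_insert, mem_singleton, not_or] at ha hb hc
  rw [filter_filter, ← card_filter_apply_eq_three (s := univ) (k := k) (by simp [hm]) (mem_univ X)
    (mem_univ a) (Ne.symm ha.1) (y := Y) (b := b) (z := Z) (c := c)]
  · refine congrArg card (filter_congr fun π _ => ?_)
    simp only [Prod.mk.injEq]
    refine ⟨And.right, fun ⟨hπa, hπb, hπc⟩ => ?_⟩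
    rw [hπa, hπb, hπc]
    exact ⟨⟨⟨hba, hcb⟩, ha.2.1, hb.2.2⟩, rfl, rfl, rfl⟩
  all_goals grind

theorem card_filter_double_descent {k : ℕ} (hm : m = 2 * k + 6) (hXY : (X : ℕ) + 1 = Y)
    (hYZ : (Y : ℕ) + 1 = Z) :
    #{π ∈ matchingsOn univ | π Y < π X ∧ π Z < π Y} =
      (2 * k + 3) * doubleFac (k + 1) + (2 * k + 3).choose 3 * doubleFac k := by
  have hXY' : X < Y := Fin.lt_def.2 (by omega)
  have hYZ' : Y < Z := Fin.lt_def.2 (by omega)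
  have huniv : #(univ : Finset (Fin m)) = 2 * (k + 1) + 4 := by
    rw [card_univ, Fintype.card_fin]
    omega
  rw [card_filter_double_descent_eq_add hXY hYZ, card_filter_double_descent_of_ne hm hXY hYZ,
    card_filter_apply_eq_and_apply_mem huniv (mem_univ X) (mem_univ Y) hXY'.ne (b := Z)
      (I := Iio X) (by simp [hYZ'.ne', (hXY'.trans hYZ').ne'])
      (fun _ _ => by grind),
    card_filter_apply_eq_and_apply_mem huniv (mem_univ Y) (mem_univ Z) hYZ'.ne (b := X)
      (I := Ioi Z) (by simp [hXY'.ne, (hXY'.trans hYZ').ne])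
      (fun _ _ => by grind),
    Fin.card_Iio, Fin.card_Ioi, ← add_assoc, ← add_mul]
  congr 2
  omega

end DoubleDescent

lemma add_choose_three_mul_doubleFac_eq (k : ℕ) :
    ((2 * k + 3) * doubleFac (k + 1) + (2 * k + 3).choose 3 * doubleFac k : ℚ) =
      ((k : ℚ) + 3 + 1) / (3 * (2 * ((k : ℚ) + 3) - 1)) * doubleFac (k + 3) := by
  have hchoose : ((2 * k + 3).choose 3 : ℚ) = (2 * k + 3) * (2 * k + 2) * (2 * k + 1) / 6 := by
    rw [show 2 * k + 3 = 3 + 2 * k by ring, Nat.cast_add_choose,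
      show 3 + 2 * k = 2 * k + 1 + 1 + 1 by ring]
    push_cast [Nat.factorial_succ]
    field_simp
    ring
  have hpos : 2 * ((k : ℚ) + 3) - 1 ≠ 0 := by
    rw [show 2 * ((k : ℚ) + 3) - 1 = 2 * k + 5 by ring]
    positivity
  simp only [doubleFac_succ, hchoose]
  push_cast
  field_simp
  ring

lemma matchings_eq_matchingsOn_univ (n : ℕ) : matchings n = matchingsOn univ := by
  ext π
  simp only [matchings, IsMatching, mem_filter, mem_univ, true_and, mem_matchingsOn_univ]

theorem stmt4 (n : ℕ) (hn : 3 ≤ n) (i : ℕ) (h1 : 1 ≤ i) (h2 : i ≤ 2 * n - 2) :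
    (((matchings n).filter fun π =>
        π ⟨i, by omega⟩ < π ⟨i - 1, by omega⟩ ∧
        π ⟨i + 1, by omega⟩ < π ⟨i, by omega⟩).card : ℚ)
      = ((n : ℚ) + 1) / (3 * (2 * n - 1)) * doubleFac n := by
  obtain ⟨k, rfl⟩ : ∃ k, n = k + 3 := ⟨n - 3, by omega⟩
  rw [matchings_eq_matchingsOn_univ, card_filter_double_descent (k := k) (by ring)
    (show i - 1 + 1 = i by omega) rfl]
  push_cast
  exact add_choose_three_mul_doubleFac_eq k
end

section
/- If \pi is chosen uniformly at random from the matchings in S_{2n}, then the expected value of the major index maj(\pi) = \sum_{i \in Des(\pi)} i is n^2. -/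
open Finset

/-!
Summing over positions, `E maj = ∑ᵢ (i + 1) P(π (i+1) < π i)`. Conjugation by the transposition
`(i i+1)` permutes the matchings; it fixes those with `π i = i + 1`, all of which have a descent
at `i`, and on the others it exchanges the values at `i` and `i + 1`, turning descents into
ascents. Hence `2 P(descent at i) = 1 + P(π i = i + 1) = 1 + 1/(2n-1)`, the last step because
conjugating by transpositions fixing `i` shows that `π i` is uniform on the other `2n - 1` points.
Each of the `2n - 1` positions thus carries a descent with probability `n/(2n-1)`, and
`E maj = n/(2n-1) · (1 + ⋯ + (2n-1)) = n²`.
-/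

open Equiv

namespace IsMatching

variable {m : ℕ} {π : Perm (Fin m)}

theorem apply_apply (h : IsMatching π) (i : Fin m) : π (π i) = i := by
  simpa using congrArg (· i) h.1

theorem conj (h : IsMatching π) (σ : Perm (Fin m)) : IsMatching (σ * π * σ⁻¹) := by
  refine ⟨?_, fun i hi => h.2 (σ⁻¹ i) ?_⟩
  · calc σ * π * σ⁻¹ * (σ * π * σ⁻¹) = σ * (π * π) * σ⁻¹ := by group
      _ = 1 := by rw [h.1]; group
  · exact Perm.eq_inv_iff_eq.mpr hi

theorem conj_swap_apply_left (h : IsMatching π) {a b : Fin m} (hab : π a ≠ b) :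
    (swap a b * π * (swap a b)⁻¹) a = π b := by
  have hba : π b ≠ a := fun hba => hab (by rw [← hba, h.apply_apply])
  simp [swap_apply_of_ne_of_ne hba (h.2 b)]

theorem conj_swap_apply_right (h : IsMatching π) {a b : Fin m} (hab : π a ≠ b) :
    (swap a b * π * (swap a b)⁻¹) b = π a := by
  simp [swap_apply_of_ne_of_ne (h.2 a) hab]

end IsMatching

theorem isMatching_conj_iff {m : ℕ} (σ π : Perm (Fin m)) :
    IsMatching (σ * π * σ⁻¹) ↔ IsMatching π :=
  ⟨fun h => by simpa [mul_assoc] using h.conj σ⁻¹, fun h => h.conj σ⟩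

theorem isMatching_revPerm (n : ℕ) : IsMatching (Fin.revPerm : Perm (Fin (2 * n))) := by
  refine ⟨Perm.ext fun i => Fin.rev_rev i, fun i hi => ?_⟩
  have := congrArg Fin.val hi
  simp only [Fin.revPerm_apply, Fin.val_rev] at this
  omega

section Counting

variable {m : ℕ}

theorem card_isMatching_conj (σ : Perm (Fin m)) (p : Perm (Fin m) → Prop) [DecidablePred p] :
    #{π | IsMatching π ∧ p (σ * π * σ⁻¹)} = #{π | IsMatching π ∧ p π} :=
  card_equiv (MulAut.conj σ).toEquiv fun π => by simp [isMatching_conj_iff]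

theorem card_isMatching_apply_eq_of_ne {a b c : Fin m} (hb : b ≠ a) (hc : c ≠ a) :
    #{π : Perm (Fin m) | IsMatching π ∧ π a = b} =
      #{π : Perm (Fin m) | IsMatching π ∧ π a = c} := by
  rw [← card_isMatching_conj (swap b c)]
  simp [swap_inv, swap_apply_of_ne_of_ne hb.symm hc.symm, swap_apply_eq_iff]

theorem sub_one_mul_card_isMatching_apply_eq {a b : Fin m} (hab : a ≠ b) :
    (m - 1) * #{π : Perm (Fin m) | IsMatching π ∧ π a = b} =
      #{π : Perm (Fin m) | IsMatching π} := by
  have hfiber_a : #{π : Perm (Fin m) | IsMatching π ∧ π a = a} = 0 :=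
    card_eq_zero.mpr (filter_eq_empty_iff.mpr fun π _ h => h.1.2 a h.2)
  rw [card_eq_sum_card_fiberwise (s := {π : Perm (Fin m) | IsMatching π}) (f := fun π => π a)
    (t := univ) fun _ _ => mem_univ _, ← sum_erase_add _ _ (mem_univ a)]
  simp only [filter_filter, hfiber_a, add_zero]
  rw [sum_congr rfl fun c hc => card_isMatching_apply_eq_of_ne (ne_of_mem_erase hc) hab.symm,
    sum_const, card_erase_of_mem (mem_univ a), card_univ, Fintype.card_fin, smul_eq_mul]

theorem two_mul_card_isMatching_apply_lt {a b : Fin m} (hab : a < b) :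
    2 * #{π : Perm (Fin m) | IsMatching π ∧ π b < π a} =
      #{π : Perm (Fin m) | IsMatching π} + #{π : Perm (Fin m) | IsMatching π ∧ π a = b} := by
  have hconj := card_isMatching_conj (swap a b) fun π => π b < π a
  beta_reduce at hconj
  rw [two_mul]
  nth_rewrite 2 [← hconj]
  simp only [card_filter, ← sum_add_distrib]
  refine sum_congr rfl fun π _ => ?_
  by_cases hπ : IsMatching π
  swap
  · simp [hπ]
  by_cases hπa : π a = b
  · have hπb : π b = a := by rw [← hπa, hπ.apply_apply]
    simp [hπ, hπa, hπb, hab]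
  · have hne : π b ≠ π a := fun h => hab.ne (π.injective h).symm
    simp only [hπ.conj_swap_apply_left hπa, hπ.conj_swap_apply_right hπa, hπ, hπa, true_and,
      if_false, add_zero]
    rcases hne.lt_or_gt with hlt | hgt
    · simp [hlt, hlt.not_gt]
    · simp [hgt, hgt.not_gt]

theorem two_mul_sub_one_mul_card_isMatching_apply_lt {a b : Fin m} (hab : a < b) :
    2 * (m - 1) * #{π : Perm (Fin m) | IsMatching π ∧ π b < π a} =
      m * #{π : Perm (Fin m) | IsMatching π} := by
  obtain ⟨k, rfl⟩ : ∃ k, m = k + 1 := ⟨m - 1, by have := a.pos; omega⟩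
  rw [mul_comm 2, mul_assoc, two_mul_card_isMatching_apply_lt hab, mul_add,
    sub_one_mul_card_isMatching_apply_eq hab.ne]
  simp only [add_tsub_cancel_right]
  ring

end Counting

section Descents

variable {k : ℕ} (π : Perm (Fin (k + 1)))

theorem castSucc_mem_desSet (i : Fin k) : i.castSucc ∈ desSet π ↔ π i.succ < π i.castSucc := by
  rw [desSet, mem_filter, dif_pos (by simp)]
  exact and_iff_right (mem_univ _)

theorem last_notMem_desSet : Fin.last k ∉ desSet π := by
  simp [desSet]

theorem maj_eq_sum_castSucc :
    maj π = ∑ i : Fin k, if π i.succ < π i.castSucc then (i : ℕ) + 1 else 0 := by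
  rw [maj, ← univ_inter (desSet π), ← sum_ite_mem, Fin.sum_univ_castSucc]
  simp only [castSucc_mem_desSet, last_notMem_desSet, if_false, add_zero, Fin.val_castSucc]

end Descents

theorem sum_maj_isMatching_eq {k : ℕ} :
    ∑ π ∈ {π : Perm (Fin (k + 1)) | IsMatching π}, maj π =
      ∑ i : Fin k,
        ((i : ℕ) + 1) * #{π : Perm (Fin (k + 1)) | IsMatching π ∧ π i.succ < π i.castSucc} := by
  simp only [maj_eq_sum_castSucc]
  rw [sum_comm]
  refine sum_congr rfl fun i _ => ?_
  rw [← sum_filter, sum_const, smul_eq_mul, filter_filter, mul_comm]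

theorem sum_val_add_one_mul_two (N : ℕ) : (∑ i : Fin N, ((i : ℕ) + 1)) * 2 = N * (N + 1) := by
  rw [Fin.sum_univ_eq_sum_range (· + 1)]
  induction N with
  | zero => simp
  | succ N ih => rw [sum_range_succ, add_mul, ih]; ring

theorem four_mul_sum_maj_isMatching (m : ℕ) :
    4 * ∑ π ∈ {π : Perm (Fin m) | IsMatching π}, maj π =
      m ^ 2 * #{π : Perm (Fin m) | IsMatching π} := by
  rcases m with _ | _ | N
  · simp [maj, desSet]
  · have hempty (π : Perm (Fin (0 + 1))) : ¬IsMatching π :=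
      fun hπ => hπ.2 0 (Fin.fin_one_eq_zero _)
    simp [hempty]
  set S := ∑ π ∈ {π : Perm (Fin (N + 1 + 1)) | IsMatching π}, maj π with hS_def
  set M := #{π : Perm (Fin (N + 1 + 1)) | IsMatching π}
  have hS : 2 * (N + 1) * S = (N + 2) * M * ∑ i : Fin (N + 1), ((i : ℕ) + 1) := by
    rw [hS_def, sum_maj_isMatching_eq, mul_sum, mul_sum]
    refine sum_congr rfl fun i _ => ?_
    have hD := two_mul_sub_one_mul_card_isMatching_apply_lt i.castSucc_lt_succ
    simp only [add_tsub_cancel_right] at hD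
    rw [mul_left_comm, hD]
    ring
  apply Nat.eq_of_mul_eq_mul_left (show 0 < N + 1 by omega)
  calc (N + 1) * (4 * S) = 2 * (2 * (N + 1) * S) := by ring
    _ = (N + 2) * M * ((∑ i : Fin (N + 1), ((i : ℕ) + 1)) * 2) := by rw [hS]; ring
    _ = (N + 1) * ((N + 1 + 1) ^ 2 * M) := by rw [sum_val_add_one_mul_two]; ring

theorem stmt9 (n : ℕ) :
    (∑ π ∈ matchings n, (maj π : ℚ)) / (matchings n).card = n ^ 2 := by
  have hM : ((matchings n).card : ℚ) ≠ 0 := by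
    exact_mod_cast (card_pos.mpr ⟨_, mem_filter.mpr ⟨mem_univ _, isMatching_revPerm n⟩⟩).ne'
  have h : (4 * ∑ π ∈ matchings n, maj π : ℚ) = (2 * n) ^ 2 * (matchings n).card := by
    exact_mod_cast four_mul_sum_maj_isMatching (2 * n)
  rw [div_eq_iff hM]
  push_cast at h
  linarith
end
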